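/- arXiv:2509.19383 — 2 statements merged into one kernel-verified Lean document; each statement's English description precedes it below -/
import Mathlib

section
/- Let X be a nonnegative random variable with CDF F (the Gamma(μ₀+1, scale φ₀) CDF) and let Y be an independent exponentially distributed random variable with mean Ω_I > 0. For j = 1,…,k define the random SINR γ_{k→j} = λ_q² X² ρ a_j / (X² ρ ϑ_j + d_sr^α d_k^α (λ_q² + ε ρ Y)). Then the outage probability of user k, namely 1 − P(γ_{k→j} > γ_thj for all j = 1,…,k), equals ∫₀^∞ e^{−z} · F(√(φ* · d_sr^α d_k^α (λ_q² + ε ρ Ω_I z))) dz, where φ_j = γ_thj/(ρ (λ_q² a_j − γ_thj ϑ_j)) and φ* = max_{1≤j≤k} φ_j. -/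
open MeasureTheory ProbabilityTheory Topology Filter

/-- Lower incomplete gamma function `γ(s, x) = ∫₀ˣ t^{s-1} e^{-t} dt`. -/
noncomputable def lowerGamma (s x : ℝ) : ℝ := ∫ t in (0:ℝ)..x, t ^ (s - 1) * Real.exp (-t)

/-- `μ₀ = ((M+1)π² − 16)/(16 − π²)`. -/
noncomputable def mu0 (M : ℕ) : ℝ := (((M : ℝ) + 1) * Real.pi ^ 2 - 16) / (16 - Real.pi ^ 2)

/-- `φ₀ = (16 − π²)/(4π)`. -/
noncomputable def phi0 : ℝ := (16 - Real.pi ^ 2) / (4 * Real.pi)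

/-- The CDF of the Gamma distribution with shape `μ₀+1` and scale `φ₀`:
`F(x) = γ(μ₀+1, x/φ₀)/Γ(μ₀+1)`. -/
noncomputable def F (M : ℕ) (x : ℝ) : ℝ :=
  lowerGamma (mu0 M + 1) (x / phi0) / Real.Gamma (mu0 M + 1)

/-!
Each SINR `λ² X² ρ aⱼ / (X² ρ ϑⱼ + c)`, with `c = d_sr^α d_k^α (λ² + ε ρ Y) > 0`, exceeds `γ_thj`
exactly when `X² > φⱼ c`, so user `k` is not in outage iff `X > √(φ* c)`. Since `X` and `Y` are
independent, conditioning on `Y` gives the outage probability `E[F(√(φ* c(Y)))]`, and `Y / Ω_I` is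
a standard exponential variable, whence the integral against `e^{-z}`.
-/

open Real Set

theorem lt_sinr_iff_lt_div {q ρ a θ γ c x : ℝ} (hρ : 0 < ρ) (hθ : 0 ≤ θ) (hc : 0 < c)
    (hγθ : γ * θ < q * a) :
    γ < q * x ^ 2 * ρ * a / (x ^ 2 * ρ * θ + c) ↔ γ / (ρ * (q * a - γ * θ)) < x ^ 2 / c := by
  have hden : 0 < x ^ 2 * ρ * θ + c := by positivity
  have hgap : 0 < ρ * (q * a - γ * θ) := mul_pos hρ (by linarith)
  rw [lt_div_iff₀ hden, div_lt_div_iff₀ hgap hc]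
  constructor <;> intro h <;> nlinarith

theorem forall_lt_sinr_iff_sqrt_lt {ι : Type*} {s : Finset ι} (hs : s.Nonempty)
    {q ρ c x : ℝ} {a θ γ : ι → ℝ} (hρ : 0 < ρ) (hc : 0 < c) (hx : 0 ≤ x)
    (hθ : ∀ j ∈ s, 0 ≤ θ j) (hγ : ∀ j ∈ s, 0 ≤ γ j)
    (hγθ : ∀ j ∈ s, γ j * θ j < q * a j) :
    (∀ j ∈ s, γ j < q * x ^ 2 * ρ * a j / (x ^ 2 * ρ * θ j + c)) ↔
      √(s.sup' hs (fun j => γ j / (ρ * (q * a j - γ j * θ j))) * c) < x := by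
  obtain ⟨j₀, hj₀⟩ := id hs
  have hsup : 0 ≤ s.sup' hs (fun j => γ j / (ρ * (q * a j - γ j * θ j))) :=
    (Finset.le_sup'_iff _).2 ⟨j₀, hj₀, div_nonneg (hγ j₀ hj₀)
      (mul_pos hρ (by linarith [hγθ j₀ hj₀])).le⟩
  rw [sqrt_lt (mul_nonneg hsup hc.le) hx, ← lt_div_iff₀ hc, Finset.sup'_lt_iff]
  exact forall₂_congr fun j hj => lt_sinr_iff_lt_div hρ (hθ j hj) hc (hγθ j hj)

section Probability

variable {Ω : Type*} [MeasurableSpace Ω] {P : Measure Ω}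

theorem measure_le_comp_eq_lintegral_of_indepFun [IsFiniteMeasure P] {β : Type*}
    [MeasurableSpace β] {X : Ω → ℝ} {W : Ω → β} {g : β → ℝ} (hX : Measurable X) (hW : Measurable W)
    (hg : Measurable g) (hXW : IndepFun X W P) :
    P {ω | X ω ≤ g (W ω)} = ∫⁻ w, P.map X (Iic (g w)) ∂P.map W := by
  have hS : MeasurableSet {p : ℝ × β | p.1 ≤ g p.2} :=
    measurableSet_le measurable_fst (hg.comp measurable_snd)
  rw [show {ω | X ω ≤ g (W ω)} = (fun ω => (X ω, W ω)) ⁻¹' {p | p.1 ≤ g p.2} from rfl,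
    ← Measure.map_apply (hX.prodMk hW) hS,
    (indepFun_iff_map_prod_eq_prod_map_map hX.aemeasurable hW.aemeasurable).1 hXW,
    Measure.prod_apply_symm hS]
  rfl

theorem measureReal_le_comp_eq_integral_cdf_of_indepFun [IsProbabilityMeasure P] {β : Type*}
    [MeasurableSpace β] {X : Ω → ℝ} {W : Ω → β} {g : β → ℝ} (hX : Measurable X) (hW : Measurable W)
    (hg : Measurable g) (hXW : IndepFun X W P) :
    P.real {ω | X ω ≤ g (W ω)} = ∫ w, cdf (P.map X) (g w) ∂P.map W := by
  have := Measure.isProbabilityMeasure_map (μ := P) hX.aemeasurable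
  rw [integral_eq_lintegral_of_nonneg_ae (ae_of_all _ fun w => cdf_nonneg _ _)
      (((monotone_cdf _).measurable.comp hg).aestronglyMeasurable), measureReal_def,
    measure_le_comp_eq_lintegral_of_indepFun hX hW hg hXW]
  simp only [ofReal_cdf]

theorem map_eq_expMeasure_of_cdf [IsProbabilityMeasure P] {Y : Ω → ℝ} (hY : Measurable Y)
    (hY0 : ∀ ω, 0 ≤ Y ω) {r : ℝ} (hr : 0 < r)
    (hcdf : ∀ y, 0 ≤ y → P.real {ω | Y ω ≤ y} = 1 - exp (-(r * y))) :
    P.map Y = expMeasure r := by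
  have := Measure.isProbabilityMeasure_map (μ := P) hY.aemeasurable
  have := isProbabilityMeasure_expMeasure hr
  refine Measure.eq_of_cdf _ _ (StieltjesFunction.ext fun y => ?_)
  rw [cdf_expMeasure_eq hr, cdf_eq_real, map_measureReal_apply hY measurableSet_Iic]
  split_ifs with hy
  · exact hcdf y hy
  · have : Y ⁻¹' Iic y = ∅ := eq_empty_of_forall_notMem fun ω hω =>
      hy ((hY0 ω).trans hω)
    rw [this, measureReal_empty]

end Probability

theorem integral_expMeasure {r : ℝ} (hr : 0 ≤ r) (f : ℝ → ℝ) :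
    ∫ x, f x ∂expMeasure r = ∫ x in Ioi 0, r * exp (-(r * x)) * f x := by
  rw [expMeasure, gammaMeasure, integral_withDensity_eq_integral_toReal_smul (f := gammaPDF 1 r)
    (measurable_gammaPDFReal 1 r).ennreal_ofReal
    (ae_of_all _ fun _ => ENNReal.ofReal_lt_top), ← integral_Ici_eq_integral_Ioi,
    ← integral_indicator measurableSet_Ici]
  congr 1 with x
  change (exponentialPDF r x).toReal * f x = _
  by_cases hx : 0 ≤ x
  · rw [exponentialPDF_of_nonneg hx, ENNReal.toReal_ofReal (by positivity),
      indicator_of_mem (mem_Ici.2 hx)]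
  · rw [exponentialPDF_of_neg (not_le.1 hx), indicator_of_notMem (by simpa using hx)]
    simp

theorem outage_probability_PRIS_NOMA_ipSIC_general
    {Ω : Type*} [MeasurableSpace Ω] (Pm : Measure Ω) [IsProbabilityMeasure Pm]
    (M : ℕ)
    (X Y : Ω → ℝ) (hXm : Measurable X) (hYm : Measurable Y)
    (hXnn : ∀ ω, 0 ≤ X ω) (hYnn : ∀ ω, 0 ≤ Y ω)
    -- X has the Gamma(μ₀+1, scale φ₀) CDF F
    (hXcdf : ∀ x : ℝ, 0 ≤ x → (Pm {ω | X ω ≤ x}).toReal = F M x)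
    -- Y is exponentially distributed with mean Ω_I
    (ΩI : ℝ) (hΩI : 0 < ΩI)
    (hYcdf : ∀ y : ℝ, 0 ≤ y → (Pm {ω | Y ω ≤ y}).toReal = 1 - Real.exp (-(y / ΩI)))
    (hindep : IndepFun X Y Pm)
    (k : ℕ) (hk : 1 ≤ k)
    (lamq rho alpha dsr dk eps : ℝ)
    (a th gth : ℕ → ℝ)
    (hlam0 : 0 < lamq) (hrho : 0 < rho)
    (hdsr : 0 < dsr) (hdk : 0 < dk)
    (heps0 : 0 < eps)
    (hth : ∀ j ∈ Finset.Icc 1 k, 0 < th j)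
    (hgth : ∀ j ∈ Finset.Icc 1 k, 0 < gth j)
    (hcond : ∀ j ∈ Finset.Icc 1 k, gth j * th j < lamq ^ 2 * a j) :
    1 - (Pm {ω | ∀ j ∈ Finset.Icc 1 k,
          gth j < lamq ^ 2 * (X ω) ^ 2 * rho * a j /
            ((X ω) ^ 2 * rho * th j
              + dsr ^ alpha * dk ^ alpha * (lamq ^ 2 + eps * rho * Y ω))}).toReal
      = ∫ z in Set.Ioi (0 : ℝ), Real.exp (-z) *
          F M (Real.sqrt
            ((Finset.Icc 1 k).sup' (Finset.nonempty_Icc.mpr hk)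
                (fun j => gth j / (rho * (lamq ^ 2 * a j - gth j * th j)))
              * (dsr ^ alpha * dk ^ alpha * (lamq ^ 2 + eps * rho * ΩI * z)))) := by
  set φ := (Finset.Icc 1 k).sup' (Finset.nonempty_Icc.mpr hk)
    (fun j => gth j / (rho * (lamq ^ 2 * a j - gth j * th j)))
  set D := dsr ^ alpha * dk ^ alpha
  set g : ℝ → ℝ := fun z => √(φ * (D * (lamq ^ 2 + eps * rho * ΩI * z)))
  have hD : 0 < D := by positivity
  have hevent : {ω | ∀ j ∈ Finset.Icc 1 k, gth j < lamq ^ 2 * (X ω) ^ 2 * rho * a j /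
      ((X ω) ^ 2 * rho * th j + D * (lamq ^ 2 + eps * rho * Y ω))} =
      {ω | g (Y ω / ΩI) < X ω} := by
    ext ω
    rw [mem_ofPred_eq, forall_lt_sinr_iff_sqrt_lt (Finset.nonempty_Icc.mpr hk) hrho
      (by positivity [hYnn ω]) (hXnn ω) (fun j hj => (hth j hj).le) (fun j hj => (hgth j hj).le)
      hcond, mem_ofPred_eq]
    simp only [g, φ, mul_assoc (eps * rho), mul_div_cancel₀ _ hΩI.ne']
  have hW : Pm.map (fun ω => Y ω / ΩI) = expMeasure 1 := by
    refine map_eq_expMeasure_of_cdf (hYm.div_const ΩI) (fun ω => div_nonneg (hYnn ω) hΩI.le)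
      one_pos fun y hy => ?_
    simp only [div_le_iff₀ hΩI]
    rw [measureReal_def, hYcdf _ (by positivity), one_mul, mul_div_cancel_right₀ _ hΩI.ne']
  have hg : Continuous g := by fun_prop
  rw [hevent, ← measureReal_def]
  calc 1 - Pm.real {ω | g (Y ω / ΩI) < X ω}
      = Pm.real {ω | X ω ≤ g (Y ω / ΩI)} := by
        rw [← probReal_compl_eq_one_sub (measurableSet_lt (by fun_prop) hXm)]
        simp only [compl_ofPred, not_lt]
    _ = ∫ z, cdf (Pm.map X) (g z) ∂expMeasure 1 := by
        rw [measureReal_le_comp_eq_integral_cdf_of_indepFun hXm (hYm.div_const ΩI)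
          hg.measurable (hindep.comp measurable_id (measurable_id.div_const ΩI)), hW]
    _ = _ := by
        rw [integral_expMeasure zero_le_one]
        refine setIntegral_congr_fun measurableSet_Ioi fun z _ => ?_
        have := Measure.isProbabilityMeasure_map (μ := Pm) hXm.aemeasurable
        rw [one_mul, one_mul, cdf_eq_real, map_measureReal_apply hXm measurableSet_Iic,
          ← hXcdf _ (sqrt_nonneg _)]
        rfl

/-- **Theorem 2 (PRIS-NOMA, ipSIC)**: the outage probability of user `k` equals
`∫₀^∞ e^{−z} F(√(φ* d_sr^α d_k^α (λ_q² + ε ρ Ω_I z))) dz`. -/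
theorem outage_probability_PRIS_NOMA_ipSIC
    {Ω : Type*} [MeasurableSpace Ω] (Pm : Measure Ω) [IsProbabilityMeasure Pm]
    (M : ℕ) (hM : 0 < M)
    (X Y : Ω → ℝ) (hXm : Measurable X) (hYm : Measurable Y)
    (hXnn : ∀ ω, 0 ≤ X ω) (hYnn : ∀ ω, 0 ≤ Y ω)
    -- X has the Gamma(μ₀+1, scale φ₀) CDF F
    (hXcdf : ∀ x : ℝ, 0 ≤ x → (Pm {ω | X ω ≤ x}).toReal = F M x)
    -- Y is exponentially distributed with mean Ω_I
    (ΩI : ℝ) (hΩI : 0 < ΩI)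
    (hYcdf : ∀ y : ℝ, 0 ≤ y → (Pm {ω | Y ω ≤ y}).toReal = 1 - Real.exp (-(y / ΩI)))
    (hindep : IndepFun X Y Pm)
    (k : ℕ) (hk : 1 ≤ k)
    (lamq rho alpha dsr dk eps : ℝ)
    (a th gth : ℕ → ℝ)
    (hlam0 : 0 < lamq) (hlam1 : lamq ≤ 1) (hrho : 0 < rho)
    (halpha : 0 < alpha) (hdsr : 0 < dsr) (hdk : 0 < dk)
    (heps0 : 0 < eps) (heps1 : eps ≤ 1)
    (ha : ∀ j ∈ Finset.Icc 1 k, 0 < a j)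
    (hth : ∀ j ∈ Finset.Icc 1 k, 0 < th j)
    (hgth : ∀ j ∈ Finset.Icc 1 k, 0 < gth j)
    (hcond : ∀ j ∈ Finset.Icc 1 k, gth j * th j < lamq ^ 2 * a j) :
    1 - (Pm {ω | ∀ j ∈ Finset.Icc 1 k,
          gth j < lamq ^ 2 * (X ω) ^ 2 * rho * a j /
            ((X ω) ^ 2 * rho * th j
              + dsr ^ alpha * dk ^ alpha * (lamq ^ 2 + eps * rho * Y ω))}).toReal
      = ∫ z in Set.Ioi (0 : ℝ), Real.exp (-z) *
          F M (Real.sqrt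
            ((Finset.Icc 1 k).sup' (Finset.nonempty_Icc.mpr hk)
                (fun j => gth j / (rho * (lamq ^ 2 * a j - gth j * th j)))
              * (dsr ^ alpha * dk ^ alpha * (lamq ^ 2 + eps * rho * ΩI * z)))) :=
  outage_probability_PRIS_NOMA_ipSIC_general Pm M X Y hXm hYm hXnn hYnn hXcdf ΩI hΩI hYcdf hindep k
    hk lamq rho alpha dsr dk eps a th gth hlam0 hrho hdsr hdk heps0 hth hgth hcond
end

section
/- Fix any constant K > 0 and define the perfect-SIC outage probability as P(ρ) = F(√(K/ρ)) for ρ > 0. Then the diversity order equals (μ₀+1)/2, i.e. −lim_{ρ→∞} log P(ρ) / log ρ = (μ₀+1)/2. -/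
/-!
For `s > 0` and `x > 0`, bounding `e^{-t}` between `e^{-x}` and `1` on `[0, x]` gives
`e^{-x} x^s / s ≤ γ(s, x) ≤ x^s / s`, so `log γ(s, x) = s log x - log s + o(1)` as `x → 0⁺`.
With `x = √(K/ρ)/φ₀` this makes `log P(ρ) + (s/2) log ρ` converge, where `s = μ₀ + 1`,
and dividing by `log ρ` yields the limit `-s/2`.
-/

open MeasureTheory ProbabilityTheory Topology Filter

open Real intervalIntegral Set

lemma pi_sq_lt_sixteen : π ^ 2 < 16 := by nlinarith [pi_pos, pi_lt_four]

lemma mu0_add_one_pos {M : ℕ} (hM : 0 < M) : 0 < mu0 M + 1 := by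
  have hden : 0 < 16 - π ^ 2 := sub_pos.2 pi_sq_lt_sixteen
  have hM' : (0 : ℝ) < M := by exact_mod_cast hM
  have h : mu0 M + 1 = M * π ^ 2 / (16 - π ^ 2) := by
    rw [mu0]; field_simp; ring
  rw [h]; positivity

lemma phi0_pos : 0 < phi0 :=
  div_pos (sub_pos.2 pi_sq_lt_sixteen) (by positivity)

section LowerGamma

variable {s x : ℝ}

lemma integral_rpow_sub_one (hs : 0 < s) (x : ℝ) :
    ∫ t in (0 : ℝ)..x, t ^ (s - 1) = x ^ s / s := by
  rw [integral_rpow (Or.inl (by linarith)), zero_rpow (by linarith : s - 1 + 1 ≠ 0)]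
  ring_nf

lemma intervalIntegrable_rpow_sub_one (hs : 0 < s) (x : ℝ) :
    IntervalIntegrable (fun t => t ^ (s - 1)) volume 0 x :=
  intervalIntegrable_rpow' (by linarith)

lemma intervalIntegrable_rpow_sub_one_mul_exp_neg (hs : 0 < s) (x : ℝ) :
    IntervalIntegrable (fun t => t ^ (s - 1) * exp (-t)) volume 0 x :=
  (intervalIntegrable_rpow_sub_one hs x).mul_continuousOn (by fun_prop)

lemma lowerGamma_le_rpow_div (hs : 0 < s) (hx : 0 ≤ x) : lowerGamma s x ≤ x ^ s / s := by
  rw [lowerGamma, ← integral_rpow_sub_one hs]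
  refine integral_mono_on hx (intervalIntegrable_rpow_sub_one_mul_exp_neg hs x)
    (intervalIntegrable_rpow_sub_one hs x) fun t ht => ?_
  exact mul_le_of_le_one_right (rpow_nonneg ht.1 _) (exp_le_one_iff.2 (by linarith [ht.1]))

lemma exp_neg_mul_rpow_div_le_lowerGamma (hs : 0 < s) (hx : 0 ≤ x) :
    exp (-x) * (x ^ s / s) ≤ lowerGamma s x := by
  rw [← integral_rpow_sub_one hs, ← intervalIntegral.integral_const_mul, lowerGamma]
  refine integral_mono_on hx ((intervalIntegrable_rpow_sub_one hs x).const_mul _)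
    (intervalIntegrable_rpow_sub_one_mul_exp_neg hs x) fun t ht => ?_
  rw [mul_comm]
  exact mul_le_mul_of_nonneg_left (exp_le_exp.2 (by linarith [ht.2])) (rpow_nonneg ht.1 _)

lemma lowerGamma_pos (hs : 0 < s) (hx : 0 < x) : 0 < lowerGamma s x :=
  (by positivity : 0 < exp (-x) * (x ^ s / s)).trans_le
    (exp_neg_mul_rpow_div_le_lowerGamma hs hx.le)

lemma log_lowerGamma_sub_mul_log_mem_Icc (hs : 0 < s) (hx : 0 < x) :
    log (lowerGamma s x) - s * log x ∈ Icc (-log s - x) (-log s) := by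
  have hlower := log_le_log (by positivity) (exp_neg_mul_rpow_div_le_lowerGamma hs hx.le)
  have hupper := log_le_log (lowerGamma_pos hs hx) (lowerGamma_le_rpow_div hs hx.le)
  rw [log_mul (exp_ne_zero _) (by positivity), log_exp, log_div (by positivity) hs.ne',
    log_rpow hx] at hlower
  rw [log_div (by positivity) hs.ne', log_rpow hx] at hupper
  constructor <;> linarith

lemma tendsto_log_lowerGamma_sub_mul_log (hs : 0 < s) :
    Tendsto (fun x => log (lowerGamma s x) - s * log x) (𝓝[>] 0) (𝓝 (-log s)) := by
  have hlower : Tendsto (fun x : ℝ => -log s - x) (𝓝[>] 0) (𝓝 (-log s)) :=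
    ((continuous_const.sub continuous_id).tendsto' 0 _ (sub_zero _)).mono_left nhdsWithin_le_nhds
  refine tendsto_of_tendsto_of_tendsto_of_le_of_le' hlower tendsto_const_nhds ?_ ?_ <;>
  filter_upwards [self_mem_nhdsWithin] with x hx
  exacts [(log_lowerGamma_sub_mul_log_mem_Icc hs hx).1,
    (log_lowerGamma_sub_mul_log_mem_Icc hs hx).2]

end LowerGamma

lemma tendsto_div_log_of_tendsto_sub_mul_log {f : ℝ → ℝ} {a L : ℝ}
    (hf : Tendsto (fun ρ => f ρ - a * log ρ) atTop (𝓝 L)) :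
    Tendsto (fun ρ => f ρ / log ρ) atTop (𝓝 a) := by
  have h := (hf.mul tendsto_log_atTop.inv_tendsto_atTop).const_add a
  rw [mul_zero, add_zero] at h
  refine h.congr' ?_
  filter_upwards [eventually_gt_atTop 1] with ρ hρ
  have := (log_pos hρ).ne'
  change a + (f ρ - a * log ρ) * (log ρ)⁻¹ = f ρ / log ρ
  field_simp
  ring

lemma tendsto_sqrt_const_div_div_nhdsGT_zero {K c : ℝ} (hK : 0 < K) (hc : 0 < c) :
    Tendsto (fun ρ => √(K / ρ) / c) atTop (𝓝[>] 0) := by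
  refine tendsto_nhdsWithin_iff.2 ⟨?_, ?_⟩
  · have h := ((continuous_sqrt.tendsto 0).comp
      (tendsto_const_nhds.div_atTop tendsto_id : Tendsto (fun ρ => K / ρ) atTop (𝓝 0))).div_const c
    simpa [Function.comp_def] using h
  · filter_upwards [eventually_gt_atTop 0] with ρ hρ
    exact div_pos (sqrt_pos.2 (div_pos hK hρ)) hc

/-- **Diversity order under perfect SIC**: for `P(ρ) = F(√(K/ρ))`, the diversity order
`−lim_{ρ→∞} log P(ρ)/log ρ` equals `(μ₀+1)/2`, i.e.
`log P(ρ)/log ρ → −(μ₀+1)/2` as `ρ → ∞`. -/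
theorem diversity_order_pSIC
    (M : ℕ) (hM : 0 < M) (K : ℝ) (hK : 0 < K) :
    Filter.Tendsto
      (fun rho : ℝ => Real.log (F M (Real.sqrt (K / rho))) / Real.log rho)
      Filter.atTop (𝓝 (-((mu0 M + 1) / 2))) := by
  set s := mu0 M + 1
  have hs : 0 < s := mu0_add_one_pos hM
  have hX := tendsto_sqrt_const_div_div_nhdsGT_zero hK phi0_pos
  refine tendsto_div_log_of_tendsto_sub_mul_log
    ((((tendsto_log_lowerGamma_sub_mul_log hs).comp hX).add_const
      (s * (log K / 2 - log phi0) - log (Gamma s))).congr' ?_)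
  filter_upwards [eventually_gt_atTop 0] with ρ hρ
  have hlogF : log (F M √(K / ρ)) = log (lowerGamma s (√(K / ρ) / phi0)) - log (Gamma s) :=
    log_div (lowerGamma_pos hs (div_pos (sqrt_pos.2 (by positivity)) phi0_pos)).ne' (Gamma_pos_of_pos hs).ne'
  have hlogX : log (√(K / ρ) / phi0) = (log K - log ρ) / 2 - log phi0 := by
    rw [log_div (by positivity) phi0_pos.ne', log_sqrt (by positivity), log_div hK.ne' hρ.ne']
  simp only [Function.comp_apply, hlogF, hlogX]
  ring
end
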